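/- arXiv:2405.09438 — 3 statements merged into one kernel-verified Lean document; each statement's English description precedes it below -/
import Mathlib

section
/- Let J_n be the n×n nilpotent Jordan block, α ∈ ℝ, D_α = diag(0, −1, −2, …, −(n−1)), and A = J_n + α D_α. Let P, Q be symmetric positive definite with P J_n + J_nᵀ P − γ P e_n e_nᵀ P = −Q for some γ > 0. Then for every y ∈ ℝⁿ, yᵀ(P A + Aᵀ P − γ P e_n e_nᵀ P) y ≤ −λ_min(Q) ‖y‖² + 2α(n−1) λ_max(P) ‖y‖². In particular, if α < λ_min(Q)/(2(n−1) λ_max(P)), there exists ᾱ > 0 with yᵀ(P A + Aᵀ P − γ P e_n e_nᵀ P) y ≤ −ᾱ ‖y‖² for all y. -/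
open Matrix

-- Rayleigh quotient decomposition
lemma rayleigh_eq {m : ℕ} (M : Matrix (Fin (m+1)) (Fin (m+1)) ℝ) (hM : M.IsHermitian)
    (y : Fin (m+1) → ℝ) :
    y ⬝ᵥ M *ᵥ y = ∑ j, hM.eigenvalues j * ((star (hM.eigenvectorUnitary : Matrix (Fin (m+1)) (Fin (m+1)) ℝ) *ᵥ y) j)^2 ∧
      (star (hM.eigenvectorUnitary : Matrix (Fin (m+1)) (Fin (m+1)) ℝ) *ᵥ y) ⬝ᵥ (star (hM.eigenvectorUnitary : Matrix (Fin (m+1)) (Fin (m+1)) ℝ) *ᵥ y) = y ⬝ᵥ y := by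
  set U : Matrix (Fin (m+1)) (Fin (m+1)) ℝ := (hM.eigenvectorUnitary : Matrix (Fin (m+1)) (Fin (m+1)) ℝ) with hUdef
  set z := star U *ᵥ y with hz
  have hvm : y ᵥ* U = z := by
    ext j
    simp [hz, Matrix.vecMul, Matrix.mulVec, dotProduct, Matrix.conjTranspose_apply, mul_comm]
  constructor
  · conv_lhs => rw [hM.spectral_theorem, Unitary.conjStarAlgAut_apply]
    rw [Matrix.mul_assoc, ← Matrix.mulVec_mulVec, Matrix.dotProduct_mulVec, hvm,
      ← Matrix.mulVec_mulVec, ← hz]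
    simp [dotProduct, Matrix.mulVec_diagonal, mul_comm, sq, mul_assoc, mul_left_comm]
  · have h1 : (U * star U) = 1 := by
      have := Matrix.UnitaryGroup.star_mul_self hM.eigenvectorUnitary
      exact mul_eq_one_comm.mpr this
    calc z ⬝ᵥ z = y ⬝ᵥ (U *ᵥ z) := by
          conv_rhs => rw [Matrix.dotProduct_mulVec, hvm]
      _ = y ⬝ᵥ ((U * star U) *ᵥ y) := by rw [hz, Matrix.mulVec_mulVec]
      _ = y ⬝ᵥ y := by rw [h1, Matrix.one_mulVec]

lemma rayleigh_low {m : ℕ} (M : Matrix (Fin (m+1)) (Fin (m+1)) ℝ) (hM : M.IsHermitian)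
    (y : Fin (m+1) → ℝ) :
    (⨅ i, hM.eigenvalues i) * (y ⬝ᵥ y) ≤ y ⬝ᵥ M *ᵥ y := by
  obtain ⟨h1, h2⟩ := rayleigh_eq M hM y
  rw [h1, ← h2]
  have : (star (hM.eigenvectorUnitary : Matrix (Fin (m+1)) (Fin (m+1)) ℝ) *ᵥ y) ⬝ᵥ (star (hM.eigenvectorUnitary : Matrix (Fin (m+1)) (Fin (m+1)) ℝ) *ᵥ y)
      = ∑ j, ((star (hM.eigenvectorUnitary : Matrix (Fin (m+1)) (Fin (m+1)) ℝ) *ᵥ y) j)^2 := by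
    simp [dotProduct, sq]
  rw [this, Finset.mul_sum]
  apply Finset.sum_le_sum
  intro j _
  have hle : (⨅ i, hM.eigenvalues i) ≤ hM.eigenvalues j :=
    ciInf_le (Finite.bddBelow_range _) j
  exact mul_le_mul_of_nonneg_right hle (sq_nonneg _)

lemma rayleigh_high {m : ℕ} (M : Matrix (Fin (m+1)) (Fin (m+1)) ℝ) (hM : M.IsHermitian)
    (y : Fin (m+1) → ℝ) :
    y ⬝ᵥ M *ᵥ y ≤ (⨆ i, hM.eigenvalues i) * (y ⬝ᵥ y) := by
  obtain ⟨h1, h2⟩ := rayleigh_eq M hM y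
  rw [h1, ← h2]
  have : (star (hM.eigenvectorUnitary : Matrix (Fin (m+1)) (Fin (m+1)) ℝ) *ᵥ y) ⬝ᵥ (star (hM.eigenvectorUnitary : Matrix (Fin (m+1)) (Fin (m+1)) ℝ) *ᵥ y)
      = ∑ j, ((star (hM.eigenvectorUnitary : Matrix (Fin (m+1)) (Fin (m+1)) ℝ) *ᵥ y) j)^2 := by
    simp [dotProduct, sq]
  rw [this, Finset.mul_sum]
  apply Finset.sum_le_sum
  intro j _
  have hle : hM.eigenvalues j ≤ (⨆ i, hM.eigenvalues i) :=
    le_ciSup (Finite.bddAbove_range _) j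
  exact mul_le_mul_of_nonneg_right hle (sq_nonneg _)

theorem stmt_8 (n : ℕ) (hn : 0 < n) (α γ : ℝ) (hα : 0 < α) (hγ : 0 < γ)
    (J Dα A : Matrix (Fin (n+1)) (Fin (n+1)) ℝ)
    (hJ : ∀ i j, J i j = if (i : ℕ) + 1 = (j : ℕ) then 1 else 0)
    (hD : Dα = Matrix.diagonal (fun i : Fin (n+1) => -(i : ℝ)))
    (hA : A = J + α • Dα)
    (P Q : Matrix (Fin (n+1)) (Fin (n+1)) ℝ) (hP : P.PosDef) (hQ : Q.PosDef)
    (en : Fin (n+1) → ℝ) (hen : en = Pi.single (Fin.last n) 1)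
    (hRic : P * J + J.transpose * P - γ • (P * Matrix.vecMulVec en en * P) = -Q) :
    (∀ y : Fin (n+1) → ℝ,
      y ⬝ᵥ (P * A + A.transpose * P - γ • (P * Matrix.vecMulVec en en * P)).mulVec y ≤
        -(⨅ i, hQ.1.eigenvalues i) * (y ⬝ᵥ y) + 2 * α * n * (⨆ i, hP.1.eigenvalues i) * (y ⬝ᵥ y)) ∧
    (α < (⨅ i, hQ.1.eigenvalues i) / (2 * n * (⨆ i, hP.1.eigenvalues i)) →
      ∃ ᾱ > (0:ℝ), ∀ y : Fin (n+1) → ℝ,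
        y ⬝ᵥ (P * A + A.transpose * P - γ • (P * Matrix.vecMulVec en en * P)).mulVec y ≤
          -ᾱ * (y ⬝ᵥ y)) := by
  have hDsym : Dα.transpose = Dα := by rw [hD]; exact Matrix.diagonal_transpose _
  have hPsym : P.transpose = P := by
    ext i j
    have := congrFun (congrFun hP.1 i) j
    simpa using this
  set L := (⨅ i, hQ.1.eigenvalues i) with hL
  set Mx := (⨆ i, hP.1.eigenvalues i) with hMx
  have hMxpos : 0 < Mx := lt_of_lt_of_le (hP.eigenvalues_pos 0)
    (le_ciSup (Finite.bddAbove_range _) 0)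
  have hkey : P * A + A.transpose * P - γ • (P * Matrix.vecMulVec en en * P)
      = -Q + α • (P * Dα + Dα * P) := by
    rw [hA, Matrix.transpose_add, Matrix.transpose_smul, hDsym, ← hRic]
    rw [mul_add, add_mul, mul_smul_comm, Matrix.smul_mul, smul_add]
    abel
  -- main estimate
  have main : ∀ y : Fin (n+1) → ℝ,
      y ⬝ᵥ (P * A + A.transpose * P - γ • (P * Matrix.vecMulVec en en * P)).mulVec y ≤
        -L * (y ⬝ᵥ y) + 2 * α * n * Mx * (y ⬝ᵥ y) := by
    intro y
    set v := Dα *ᵥ y with hv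
    have vsym : ∀ B : Matrix (Fin (n+1)) (Fin (n+1)) ℝ, B.transpose = B →
        ∀ u w : Fin (n+1) → ℝ, u ⬝ᵥ B *ᵥ w = w ⬝ᵥ B *ᵥ u := by
      intro B hB u w
      rw [Matrix.dotProduct_mulVec, ← hB, Matrix.vecMul_transpose, hB, dotProduct_comm]
    have hsplit : y ⬝ᵥ (P * Dα + Dα * P) *ᵥ y = 2 * (y ⬝ᵥ P *ᵥ v) := by
      rw [Matrix.add_mulVec, dotProduct_add, ← Matrix.mulVec_mulVec,
        ← Matrix.mulVec_mulVec, ← hv]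
      have h2 : y ⬝ᵥ Dα *ᵥ (P *ᵥ y) = y ⬝ᵥ P *ᵥ v := by
        rw [vsym Dα hDsym y (P *ᵥ y), ← hv, dotProduct_comm, vsym P hPsym v y]
      rw [h2]; ring
    have hQlow : L * (y ⬝ᵥ y) ≤ y ⬝ᵥ Q *ᵥ y := rayleigh_low Q hQ.1 y
    have hPy : y ⬝ᵥ P *ᵥ y ≤ Mx * (y ⬝ᵥ y) := rayleigh_high P hP.1 y
    have hPv : v ⬝ᵥ P *ᵥ v ≤ Mx * (v ⬝ᵥ v) := rayleigh_high P hP.1 v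
    have hvv : v ⬝ᵥ v ≤ (n:ℝ)^2 * (y ⬝ᵥ y) := by
      have hvi : ∀ i, v i = -(i:ℝ) * y i := by
        intro i; rw [hv, hD]; exact Matrix.mulVec_diagonal _ _ _
      have : v ⬝ᵥ v = ∑ i, ((i : Fin (n+1)) : ℝ)^2 * (y i)^2 := by
        simp only [dotProduct, hvi]; apply Finset.sum_congr rfl; intro i _; ring
      rw [this, dotProduct, Finset.mul_sum]
      apply Finset.sum_le_sum
      intro i _
      have hin : ((i : Fin (n+1)) : ℝ) ≤ (n:ℝ) := by
        have := Fin.is_le i; exact_mod_cast this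
      have h0 : (0:ℝ) ≤ ((i : Fin (n+1)) : ℝ) := by positivity
      have : ((i : Fin (n+1)) : ℝ)^2 ≤ (n:ℝ)^2 := by nlinarith
      have := mul_le_mul_of_nonneg_right this (sq_nonneg (y i))
      calc ((i : Fin (n+1)) : ℝ)^2 * (y i)^2 ≤ (n:ℝ)^2 * (y i)^2 := this
        _ = (n:ℝ)^2 * (y i * y i) := by ring
    have hampm : 2 * (n:ℝ) * (y ⬝ᵥ P *ᵥ v) ≤ (n:ℝ)^2 * (y ⬝ᵥ P *ᵥ y) + (v ⬝ᵥ P *ᵥ v) := by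
      have hw := hP.posSemidef.re_dotProduct_nonneg (star ((n:ℝ) • y - v))
      simp only [star_trivial, RCLike.re_to_real] at hw
      have hexp : ((n:ℝ) • y - v) ⬝ᵥ P *ᵥ ((n:ℝ) • y - v)
          = (n:ℝ)^2 * (y ⬝ᵥ P *ᵥ y) - 2 * (n:ℝ) * (y ⬝ᵥ P *ᵥ v) + (v ⬝ᵥ P *ᵥ v) := by
        rw [Matrix.mulVec_sub, Matrix.mulVec_smul]
        simp only [sub_dotProduct, dotProduct_sub, smul_dotProduct,
          dotProduct_smul, smul_eq_mul]
        rw [vsym P hPsym v y]; ring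
      rw [hexp] at hw; linarith
    have hnpos : (0:ℝ) < (n:ℝ) := by exact_mod_cast hn
    have hbil : y ⬝ᵥ P *ᵥ v ≤ (n:ℝ) * Mx * (y ⬝ᵥ y) := by
      have h1 : (n:ℝ)^2 * (y ⬝ᵥ P *ᵥ y) ≤ (n:ℝ)^2 * (Mx * (y ⬝ᵥ y)) :=
        mul_le_mul_of_nonneg_left hPy (by positivity)
      have h2 : v ⬝ᵥ P *ᵥ v ≤ Mx * ((n:ℝ)^2 * (y ⬝ᵥ y)) :=
        le_trans hPv (mul_le_mul_of_nonneg_left hvv (le_of_lt hMxpos))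
      nlinarith
    -- combine
    rw [hkey, Matrix.add_mulVec, dotProduct_add, Matrix.neg_mulVec,
      dotProduct_neg, Matrix.smul_mulVec, dotProduct_smul]
    have := hsplit
    have hα' : (0:ℝ) ≤ α := le_of_lt hα
    calc -(y ⬝ᵥ Q *ᵥ y) + α • (y ⬝ᵥ (P * Dα + Dα * P) *ᵥ y)
        ≤ -(L * (y ⬝ᵥ y)) + α * (2 * ((n:ℝ) * Mx * (y ⬝ᵥ y))) := by
          have h3 : α • (y ⬝ᵥ (P * Dα + Dα * P) *ᵥ y) ≤ α * (2 * ((n:ℝ) * Mx * (y ⬝ᵥ y))) := by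
            rw [smul_eq_mul, hsplit]
            exact mul_le_mul_of_nonneg_left (by linarith) hα'
          linarith
      _ = -L * (y ⬝ᵥ y) + 2 * α * (n:ℝ) * Mx * (y ⬝ᵥ y) := by ring
  refine ⟨main, ?_⟩
  intro hlt
  have hd : (0:ℝ) < 2 * (n:ℝ) * Mx := by
    have : (0:ℝ) < (n:ℝ) := by exact_mod_cast hn
    positivity
  have hαd : α * (2 * (n:ℝ) * Mx) < L := (lt_div_iff₀ hd).mp hlt
  refine ⟨L - 2 * α * (n:ℝ) * Mx, by nlinarith, ?_⟩
  intro y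
  have := main y
  calc y ⬝ᵥ (P * A + A.transpose * P - γ • (P * Matrix.vecMulVec en en * P)).mulVec y
      ≤ -L * (y ⬝ᵥ y) + 2 * α * n * Mx * (y ⬝ᵥ y) := this
    _ = -(L - 2 * α * (n:ℝ) * Mx) * (y ⬝ᵥ y) := by ring
end

section
/- Let c₀, c₁, c₂ > 0 and let V : [0, ∞) → [0, ∞) be differentiable with V'(τ) ≤ −c₀ V(τ) + 2c₁ e^{−c₂ τ} √(V(τ)) for all τ ≥ 0. Then √(V(τ)) ≤ e^{−c₀τ/2} √(V(0)) + (2c₁/|c₀ − 2c₂|)·(e^{−c₂τ} + e^{−c₀τ/2}) when c₀ ≠ 2c₂; in particular V is bounded on [0,∞) and V(τ) → 0 as τ → ∞. -/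
open Real Set

lemma gronwall_aux (c₀ c₁ c₂ ε : ℝ) (h₀ : 0 < c₀) (h₁ : 0 < c₁) (hε : 0 < ε)
    (hb : c₀ / 2 - c₂ ≠ 0)
    (V : ℝ → ℝ) (hV : Differentiable ℝ V) (hVnn : ∀ τ, 0 ≤ V τ)
    (hineq : ∀ τ ≥ (0:ℝ),
      deriv V τ ≤ -c₀ * V τ + 2 * c₁ * Real.exp (-c₂ * τ) * Real.sqrt (V τ)) :
    ∀ τ ≥ (0:ℝ),
      Real.sqrt (V τ + ε) ≤ Real.exp (-c₀ * τ / 2) * Real.sqrt (V 0 + ε)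
        + (c₁ / (c₀ / 2 - c₂)) * (Real.exp (-c₂ * τ) - Real.exp (-c₀ * τ / 2))
        + Real.sqrt ε := by
  set b : ℝ := c₀ / 2 - c₂ with hbdef
  set G : ℝ → ℝ := fun τ =>
    Real.exp (c₀ * τ / 2) * Real.sqrt (V τ + ε) - (c₁ / b) * Real.exp (b * τ)
      - Real.sqrt ε * Real.exp (c₀ * τ / 2) with hG
  have hpos : ∀ τ, 0 < V τ + ε := fun τ => by have := hVnn τ; linarith
  have hderivG : ∀ τ : ℝ, HasDerivAt G
      ((c₀ / 2 * Real.exp (c₀ * τ / 2)) * Real.sqrt (V τ + ε)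
        + Real.exp (c₀ * τ / 2) * (deriv V τ / (2 * Real.sqrt (V τ + ε)))
        - (c₁ / b) * (b * Real.exp (b * τ))
        - Real.sqrt ε * (c₀ / 2 * Real.exp (c₀ * τ / 2))) τ := by
    intro τ
    have hlin : HasDerivAt (fun τ : ℝ => c₀ * τ / 2) (c₀ / 2) τ := by
      simpa using ((hasDerivAt_id τ).const_mul c₀).div_const 2
    have hexp1 : HasDerivAt (fun τ : ℝ => Real.exp (c₀ * τ / 2))
        (c₀ / 2 * Real.exp (c₀ * τ / 2)) τ := by
      simpa [mul_comm] using hlin.exp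
    have hlin2 : HasDerivAt (fun τ : ℝ => b * τ) b τ := by
      simpa using (hasDerivAt_id τ).const_mul b
    have hexp2 : HasDerivAt (fun τ : ℝ => Real.exp (b * τ)) (b * Real.exp (b * τ)) τ := by
      simpa [mul_comm] using hlin2.exp
    have hsq : HasDerivAt (fun τ => Real.sqrt (V τ + ε))
        (deriv V τ / (2 * Real.sqrt (V τ + ε))) τ :=
      (((hV τ).hasDerivAt).add_const ε).sqrt (ne_of_gt (hpos τ))
    exact ((hexp1.mul hsq).sub (hexp2.const_mul (c₁ / b))).sub (hexp1.const_mul (Real.sqrt ε))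
  have hanti : AntitoneOn G (Ici (0:ℝ)) := by
    apply antitoneOn_of_deriv_nonpos (convex_Ici 0)
    · exact fun τ _ => ((hderivG τ).differentiableAt.continuousAt).continuousWithinAt
    · exact fun τ _ => (hderivG τ).differentiableAt.differentiableWithinAt
    · intro τ hτ
      rw [interior_Ici] at hτ
      rw [(hderivG τ).deriv]
      have hτ0 : (0:ℝ) ≤ τ := le_of_lt hτ
      set u : ℝ := Real.sqrt (V τ + ε) with hu
      have hupos : 0 < u := Real.sqrt_pos.mpr (hpos τ)
      have hu2 : u ^ 2 = V τ + ε := Real.sq_sqrt (le_of_lt (hpos τ))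
      have hsVle : Real.sqrt (V τ) ≤ u := Real.sqrt_le_sqrt (by linarith)
      have hεu : Real.sqrt ε ≤ u := Real.sqrt_le_sqrt (by have := hVnn τ; linarith)
      have hεsq : Real.sqrt ε ^ 2 = ε := Real.sq_sqrt (le_of_lt hε)
      have hεle : ε ≤ Real.sqrt ε * u := by nlinarith [Real.sqrt_nonneg ε]
      have hD := hineq τ hτ0
      have hkey : c₀ * u ^ 2 + deriv V τ ≤
          2 * c₁ * Real.exp (-c₂ * τ) * u + c₀ * (Real.sqrt ε * u) := by
        have hexpnn : 0 < Real.exp (-c₂ * τ) := Real.exp_pos _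
        nlinarith [hVnn τ, Real.sqrt_nonneg (V τ),
          mul_le_mul_of_nonneg_left hsVle
            (by positivity : (0:ℝ) ≤ 2 * c₁ * Real.exp (-c₂ * τ))]
      -- convert to the derivative bound
      have hE : Real.exp (b * τ) = Real.exp (c₀ * τ / 2) * Real.exp (-c₂ * τ) := by
        rw [← Real.exp_add, hbdef]; ring_nf
      have hbne : (b:ℝ) ≠ 0 := hb
      have hEpos : 0 < Real.exp (c₀ * τ / 2) := Real.exp_pos _
      have h2u : (0:ℝ) < 2 * u := by linarith
      have hdivle : deriv V τ / (2 * u) ≤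
          c₁ * Real.exp (-c₂ * τ) + c₀ / 2 * Real.sqrt ε - c₀ / 2 * u := by
        rw [div_le_iff₀ h2u]
        nlinarith
      have : (c₀ / 2 * Real.exp (c₀ * τ / 2)) * u
          + Real.exp (c₀ * τ / 2) * (deriv V τ / (2 * u))
          - (c₁ / b) * (b * Real.exp (b * τ))
          - Real.sqrt ε * (c₀ / 2 * Real.exp (c₀ * τ / 2)) ≤ 0 := by
        rw [hE]
        have h3 : (c₁ / b) * (b * (Real.exp (c₀ * τ / 2) * Real.exp (-c₂ * τ)))
            = c₁ * (Real.exp (c₀ * τ / 2) * Real.exp (-c₂ * τ)) := by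
          field_simp
        rw [h3]
        nlinarith [mul_le_mul_of_nonneg_left hdivle (le_of_lt hEpos)]
      exact this
  intro τ hτ
  have hGle : G τ ≤ G 0 := hanti (self_mem_Ici) hτ hτ
  have hG0 : G 0 = Real.sqrt (V 0 + ε) - c₁ / b - Real.sqrt ε := by
    show Real.exp (c₀ * 0 / 2) * Real.sqrt (V 0 + ε) - (c₁ / b) * Real.exp (b * 0)
      - Real.sqrt ε * Real.exp (c₀ * 0 / 2) = _
    rw [mul_zero, zero_div, mul_zero, Real.exp_zero]
    ring
  have hEpos : 0 < Real.exp (c₀ * τ / 2) := Real.exp_pos _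
  have hGτ : G τ = Real.exp (c₀ * τ / 2) * Real.sqrt (V τ + ε)
      - (c₁ / b) * Real.exp (b * τ) - Real.sqrt ε * Real.exp (c₀ * τ / 2) := rfl
  rw [hGτ, hG0] at hGle
  have hinv : Real.exp (-c₀ * τ / 2) = (Real.exp (c₀ * τ / 2))⁻¹ := by
    rw [← Real.exp_neg]; ring_nf
  have hEb : Real.exp (b * τ) = Real.exp (c₀ * τ / 2) * Real.exp (-c₂ * τ) := by
    rw [← Real.exp_add, hbdef]; ring_nf
  set S := Real.sqrt (V τ + ε)
  set X := Real.sqrt (V 0 + ε)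
  set E := Real.exp (c₀ * τ / 2) with hEdef
  set I := E⁻¹ with hIdef
  set K := c₁ / b with hK
  set c := Real.exp (-c₂ * τ) with hc
  have hIpos : 0 < I := inv_pos.mpr hEpos
  have hIE : I * E = 1 := inv_mul_cancel₀ (ne_of_gt hEpos)
  have hGle' : E * S - K * (E * c) - Real.sqrt ε * E ≤ X - K - Real.sqrt ε := by
    rw [hEb] at hGle; linarith [hGle]
  have h6 := mul_le_mul_of_nonneg_left hGle' (le_of_lt hIpos)
  have hL : I * (E * S - K * (E * c) - Real.sqrt ε * E) = S - K * c - Real.sqrt ε := by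
    have : I * (E * S - K * (E * c) - Real.sqrt ε * E)
        = (I * E) * S - K * ((I * E) * c) - Real.sqrt ε * (I * E) := by ring
    rw [this, hIE]; ring
  rw [hL] at h6
  have hR : I * (X - K - Real.sqrt ε) = I * X - K * I - Real.sqrt ε * I := by ring
  rw [hR] at h6
  have hsεI : 0 ≤ Real.sqrt ε * I := mul_nonneg (Real.sqrt_nonneg ε) (le_of_lt hIpos)
  have hinvI : Real.exp (-c₀ * τ / 2) = I := hinv
  rw [hinvI]
  have : S ≤ I * X + K * (c - I) + Real.sqrt ε := by nlinarith
  linarith [this]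

theorem stmt_11 (c₀ c₁ c₂ : ℝ) (h₀ : 0 < c₀) (h₁ : 0 < c₁) (h₂ : 0 < c₂)
    (hne : c₀ ≠ 2 * c₂)
    (V : ℝ → ℝ) (hV : Differentiable ℝ V) (hVnn : ∀ τ, 0 ≤ V τ)
    (hineq : ∀ τ ≥ (0:ℝ),
      deriv V τ ≤ -c₀ * V τ + 2 * c₁ * Real.exp (-c₂ * τ) * Real.sqrt (V τ)) :
    (∀ τ ≥ (0:ℝ), Real.sqrt (V τ) ≤ Real.exp (-c₀ * τ / 2) * Real.sqrt (V 0)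
        + (2 * c₁ / |c₀ - 2 * c₂|) * (Real.exp (-c₂ * τ) + Real.exp (-c₀ * τ / 2))) ∧
    (∃ C : ℝ, ∀ τ ≥ (0:ℝ), V τ ≤ C) ∧
    Filter.Tendsto V Filter.atTop (nhds 0) := by
  have hb : c₀ / 2 - c₂ ≠ 0 := fun h => hne (by linarith)
  set b : ℝ := c₀ / 2 - c₂ with hbdef
  set K : ℝ := 2 * c₁ / |c₀ - 2 * c₂| with hKdef
  have habs : |c₀ - 2 * c₂| = 2 * |b| := by
    rw [show c₀ - 2 * c₂ = 2 * b from by rw [hbdef]; ring, abs_mul]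
    norm_num
  have hKb : K = c₁ / |b| := by
    rw [hKdef, habs]
    rw [mul_comm 2 |b|, mul_div_assoc, ← div_div]
    ring_nf
  have hKpos : 0 < K := by
    rw [hKb]; exact div_pos h₁ (abs_pos.mpr hb)
  -- main pointwise bound
  have main : ∀ τ ≥ (0:ℝ), Real.sqrt (V τ) ≤ Real.exp (-c₀ * τ / 2) * Real.sqrt (V 0)
      + K * (Real.exp (-c₂ * τ) + Real.exp (-c₀ * τ / 2)) := by
    intro τ hτ
    set e1 := Real.exp (-c₂ * τ) with he1
    set e2 := Real.exp (-c₀ * τ / 2) with he2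
    have hL : Real.sqrt (V τ) ≤ e2 * Real.sqrt (V 0) + (c₁ / b) * (e1 - e2) := by
      have hcont : Filter.Tendsto
          (fun ε : ℝ => e2 * Real.sqrt (V 0 + ε) + (c₁ / b) * (e1 - e2) + Real.sqrt ε)
          (nhdsWithin 0 (Set.Ioi 0))
          (nhds (e2 * Real.sqrt (V 0 + 0) + (c₁ / b) * (e1 - e2) + Real.sqrt 0)) := by
        apply Filter.Tendsto.mono_left _ nhdsWithin_le_nhds
        exact (((continuous_const.mul
          (Real.continuous_sqrt.comp (continuous_const.add continuous_id))).add
          continuous_const).add Real.continuous_sqrt).tendsto 0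
      rw [add_zero, Real.sqrt_zero, add_zero] at hcont
      refine ge_of_tendsto hcont ?_
      filter_upwards [self_mem_nhdsWithin] with ε hε
      have h1 : Real.sqrt (V τ) ≤ Real.sqrt (V τ + ε) :=
        Real.sqrt_le_sqrt (by linarith [le_of_lt (Set.mem_Ioi.mp hε)])
      have h2 := gronwall_aux c₀ c₁ c₂ ε h₀ h₁ (Set.mem_Ioi.mp hε) hb V hV hVnn hineq τ hτ
      rw [← hbdef, ← he1, ← he2] at h2
      linarith
    have hd : (c₁ / b) * (e1 - e2) ≤ K * (e1 + e2) := by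
      calc (c₁ / b) * (e1 - e2) ≤ |(c₁ / b) * (e1 - e2)| := le_abs_self _
        _ = (c₁ / |b|) * |e1 - e2| := by
            rw [abs_mul, abs_div, abs_of_pos h₁]
        _ ≤ (c₁ / |b|) * (e1 + e2) := by
            apply mul_le_mul_of_nonneg_left _ (by positivity)
            have := abs_sub_abs_le_abs_sub e1 e2
            have h3 : |e1| = e1 := abs_of_pos (Real.exp_pos _)
            have h4 : |e2| = e2 := abs_of_pos (Real.exp_pos _)
            rw [abs_sub_le_iff]
            constructor <;> nlinarith [Real.exp_pos (-c₂ * τ), Real.exp_pos (-c₀ * τ / 2)]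
        _ = K * (e1 + e2) := by rw [hKb]
    linarith
  refine ⟨main, ?_, ?_⟩
  · -- boundedness
    refine ⟨(Real.sqrt (V 0) + K * 2) ^ 2, fun τ hτ => ?_⟩
    have h1 := main τ hτ
    have he1 : Real.exp (-c₂ * τ) ≤ 1 := Real.exp_le_one_iff.mpr (by nlinarith)
    have he2 : Real.exp (-c₀ * τ / 2) ≤ 1 := Real.exp_le_one_iff.mpr (by nlinarith)
    have he2p : 0 < Real.exp (-c₀ * τ / 2) := Real.exp_pos _
    have he1p : 0 < Real.exp (-c₂ * τ) := Real.exp_pos _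
    have hB : Real.sqrt (V τ) ≤ Real.sqrt (V 0) + K * 2 := by
      nlinarith [Real.sqrt_nonneg (V 0)]
    have hVeq : V τ = Real.sqrt (V τ) ^ 2 := (Real.sq_sqrt (hVnn τ)).symm
    rw [hVeq]
    exact pow_le_pow_left₀ (Real.sqrt_nonneg _) hB 2
  · -- tendsto
    have t2 : Filter.Tendsto (fun τ : ℝ => Real.exp (-c₀ * τ / 2)) Filter.atTop (nhds 0) := by
      have h : Filter.Tendsto (fun τ : ℝ => c₀ * τ / 2) Filter.atTop Filter.atTop :=
        (Filter.tendsto_id.const_mul_atTop h₀).atTop_div_const (by norm_num)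
      have := Real.tendsto_exp_neg_atTop_nhds_zero.comp h
      convert this using 2 with τ
      simp [Function.comp]
      ring
    have t1 : Filter.Tendsto (fun τ : ℝ => Real.exp (-c₂ * τ)) Filter.atTop (nhds 0) := by
      have h : Filter.Tendsto (fun τ : ℝ => c₂ * τ) Filter.atTop Filter.atTop :=
        Filter.tendsto_id.const_mul_atTop h₂
      have := Real.tendsto_exp_neg_atTop_nhds_zero.comp h
      convert this using 2 with τ
      simp [Function.comp]
    have tg : Filter.Tendsto
        (fun τ : ℝ => (Real.exp (-c₀ * τ / 2) * Real.sqrt (V 0)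
          + K * (Real.exp (-c₂ * τ) + Real.exp (-c₀ * τ / 2))) ^ 2)
        Filter.atTop (nhds 0) := by
      have := ((t2.mul_const (Real.sqrt (V 0))).add ((t1.add t2).const_mul K)).pow 2
      simpa using this
    apply squeeze_zero' (Filter.Eventually.of_forall fun τ => hVnn τ) _ tg
    filter_upwards [Filter.eventually_ge_atTop (0:ℝ)] with τ hτ
    have h1 := main τ hτ
    have hVeq : V τ = Real.sqrt (V τ) ^ 2 := (Real.sq_sqrt (hVnn τ)).symm
    rw [hVeq]
    exact pow_le_pow_left₀ (Real.sqrt_nonneg _) h1 2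
end

section
/- Let Γ* ∈ ℝ and let Γ : [0,∞) → ℝ be differentiable with Γ'(τ) = g(τ) ≥ 0 for a continuous function g. Suppose V₁ : [0,∞) → [0,∞) is differentiable and satisfies V₁'(τ) ≤ −ᾱ‖y(τ)‖² − 2c(τ)(Γ(τ) − Γ*)g₀(τ), where c(τ)g₀(τ) relates to g by (1−ε_b)(Γ(τ)−Γ*) Γ'(τ) c̃ = c(τ)(Γ(τ)−Γ*)g₀(τ) for the appropriate constant c̃ = 1. Define V₂(τ) = (1−ε_b)(Γ(τ) − Γ*)². Then V̄ = V₁ + V₂ satisfies V̄'(τ) ≤ −ᾱ‖y(τ)‖² ≤ 0, hence V̄(τ) ≤ V̄(0), and both y(τ) and Γ(τ) are bounded on [0,∞). -/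
theorem stmt_14 (n : ℕ) (εb ᾱ Γs p : ℝ) (hεb0 : 0 ≤ εb) (hεb1 : εb < 1)
    (hᾱ : 0 < ᾱ) (hp : 0 < p)
    (Γ g g₀ c : ℝ → ℝ) (y : ℝ → EuclideanSpace ℝ (Fin n))
    (hΓd : Differentiable ℝ Γ) (hg : Continuous g) (hgnn : ∀ τ, 0 ≤ g τ)
    (hΓ' : ∀ τ, deriv Γ τ = g τ)
    (V₁ V₂ : ℝ → ℝ) (hV₁d : Differentiable ℝ V₁) (hV₁nn : ∀ τ, 0 ≤ V₁ τ)
    (hV₁low : ∀ τ, p * ‖y τ‖^2 ≤ V₁ τ)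
    (hV₁' : ∀ τ ≥ (0:ℝ), deriv V₁ τ ≤ -ᾱ * ‖y τ‖^2 - 2 * c τ * (Γ τ - Γs) * g₀ τ)
    (hrel : ∀ τ, (1 - εb) * (Γ τ - Γs) * deriv Γ τ = c τ * (Γ τ - Γs) * g₀ τ)
    (hV₂ : ∀ τ, V₂ τ = (1 - εb) * (Γ τ - Γs)^2) :
    (∀ τ ≥ (0:ℝ), deriv (fun s => V₁ s + V₂ s) τ ≤ -ᾱ * ‖y τ‖^2 ∧ -ᾱ * ‖y τ‖^2 ≤ 0) ∧
    (∀ τ ≥ (0:ℝ), V₁ τ + V₂ τ ≤ V₁ 0 + V₂ 0) ∧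
    (∃ C : ℝ, ∀ τ ≥ (0:ℝ), ‖y τ‖ ≤ C ∧ |Γ τ| ≤ C) := by
  have hεb : 0 < 1 - εb := by linarith
  have hV₂eq : V₂ = fun τ => (1 - εb) * (Γ τ - Γs)^2 := funext hV₂
  have hV₂has : ∀ τ, HasDerivAt V₂ ((1 - εb) * (2 * (Γ τ - Γs)^1 * deriv Γ τ)) τ := by
    intro τ
    rw [hV₂eq]
    exact (((hΓd τ).hasDerivAt.sub_const Γs).pow 2).const_mul (1 - εb)
  have hV₂d : Differentiable ℝ V₂ := fun τ => (hV₂has τ).differentiableAt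
  have hderiv : ∀ τ, deriv (fun s => V₁ s + V₂ s) τ = deriv V₁ τ + deriv V₂ τ := by
    intro τ
    exact deriv_add (hV₁d τ) (hV₂d τ)
  have hV₂' : ∀ τ, deriv V₂ τ = 2 * (c τ * (Γ τ - Γs) * g₀ τ) := by
    intro τ
    rw [(hV₂has τ).deriv]
    have := hrel τ
    nlinarith [this]
  have hmain : ∀ τ ≥ (0:ℝ), deriv (fun s => V₁ s + V₂ s) τ ≤ -ᾱ * ‖y τ‖^2 := by
    intro τ hτ
    rw [hderiv, hV₂']
    have := hV₁' τ hτ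
    linarith
  have hnonpos : ∀ τ : ℝ, -ᾱ * ‖y τ‖^2 ≤ 0 := by
    intro τ
    have : 0 ≤ ‖y τ‖^2 := sq_nonneg _
    nlinarith
  have hmono : ∀ τ ≥ (0:ℝ), V₁ τ + V₂ τ ≤ V₁ 0 + V₂ 0 := by
    have hanti : AntitoneOn (fun s => V₁ s + V₂ s) (Set.Ici (0:ℝ)) := by
      apply antitoneOn_of_deriv_nonpos (convex_Ici 0)
      · exact ((hV₁d.add hV₂d).continuous).continuousOn
      · intro τ hτ
        exact ((hV₁d.add hV₂d) τ).differentiableWithinAt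
      · intro τ hτ
        rw [interior_Ici] at hτ
        exact le_trans (hmain τ (le_of_lt hτ)) (hnonpos τ)
    intro τ hτ
    exact hanti (Set.self_mem_Ici) hτ hτ
  refine ⟨fun τ hτ => ⟨hmain τ hτ, hnonpos τ⟩, hmono, ?_⟩
  set B := V₁ 0 + V₂ 0 with hB
  have hBnn : 0 ≤ B := by
    have := hV₁nn 0
    have h2 : 0 ≤ V₂ 0 := by rw [hV₂]; positivity
    linarith
  refine ⟨Real.sqrt (B / p) + Real.sqrt (B / (1 - εb)) + |Γs|, fun τ hτ => ?_⟩
  have hV₂nn : 0 ≤ V₂ τ := by rw [hV₂]; positivity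
  have hle := hmono τ hτ
  constructor
  · have h1 : p * ‖y τ‖^2 ≤ B := le_trans (hV₁low τ) (by linarith)
    have h2 : ‖y τ‖^2 ≤ B / p := by
      rw [le_div_iff₀ hp]; linarith
    have : ‖y τ‖ ≤ Real.sqrt (B / p) := by
      rw [show ‖y τ‖ = Real.sqrt (‖y τ‖^2) from (Real.sqrt_sq (norm_nonneg _)).symm]
      exact Real.sqrt_le_sqrt h2
    have : (0:ℝ) ≤ Real.sqrt (B / (1 - εb)) := Real.sqrt_nonneg _
    have : (0:ℝ) ≤ |Γs| := abs_nonneg _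
    linarith [‹‖y τ‖ ≤ Real.sqrt (B / p)›]
  · have h1 : (1 - εb) * (Γ τ - Γs)^2 ≤ B := by
      rw [← hV₂]; linarith [hV₁nn τ]
    have h2 : (Γ τ - Γs)^2 ≤ B / (1 - εb) := by
      rw [le_div_iff₀ hεb]; linarith
    have h3 : |Γ τ - Γs| ≤ Real.sqrt (B / (1 - εb)) := by
      rw [show |Γ τ - Γs| = Real.sqrt ((Γ τ - Γs)^2) from (Real.sqrt_sq_eq_abs _).symm]
      exact Real.sqrt_le_sqrt h2
    have h4 : |Γ τ| ≤ |Γ τ - Γs| + |Γs| := by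
      calc |Γ τ| = |(Γ τ - Γs) + Γs| := by ring_nf
        _ ≤ |Γ τ - Γs| + |Γs| := abs_add_le _ _
    have : (0:ℝ) ≤ Real.sqrt (B / p) := Real.sqrt_nonneg _
    linarith
end
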